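/- arXiv:2501.15483 — 2 statements merged into one kernel-verified Lean document; each statement's English description precedes it below -/
import Mathlib

section
/- If α² ≥ 4γδ with α, γ, δ ≥ 0 and α > 0, then for every n ≥ 0 the polynomial value f_n(−γδ/α²) is strictly positive, where f_n is defined by f_0 = f_1 = 1 and f_n(λ) = f_{n−1}(λ) + λ·f_{n−2}(λ). -/
/-! For `λ ≥ -1/4` the ratio `f (n+1) / f n` never drops below `1/2`, the double fixed point of
`x ↦ 1 + λ / x` at `λ = -1/4`: if `f n ≤ 2 f (n+1)`, then
`f (n+2) = f (n+1) + λ f n ≥ f (n+1) - f n / 4 ≥ f (n+1) / 2`.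
Positivity propagates along with this bound, and `α² ≥ 4γδ` gives `-γδ/α² ≥ -1/4`. -/

/-- The Fibonacci weight polynomials, defined by the recurrence
`f 0 = f 1 = 1`, `f (n+2) = f (n+1) + λ f n`. -/
noncomputable def snakeFib : ℕ → ℝ → ℝ
  | 0, _ => 1
  | 1, _ => 1
  | (n + 2), l => snakeFib (n + 1) l + l * snakeFib n l

section

variable {l : ℝ}

theorem snakeFib_pos_and_le_two_mul_succ (hl : -(1 / 4) ≤ l) (n : ℕ) :
    0 < snakeFib n l ∧ snakeFib n l ≤ 2 * snakeFib (n + 1) l := by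
  induction n with
  | zero => norm_num [snakeFib]
  | succ n ih =>
    obtain ⟨hpos, hratio⟩ := ih
    have hrec : snakeFib (n + 2) l = snakeFib (n + 1) l + l * snakeFib n l := rfl
    have hquarter : -(1 / 4) * snakeFib n l ≤ l * snakeFib n l :=
      mul_le_mul_of_nonneg_right hl hpos.le
    exact ⟨by linarith, by linarith⟩

theorem snakeFib_pos (hl : -(1 / 4) ≤ l) (n : ℕ) : 0 < snakeFib n l :=
  (snakeFib_pos_and_le_two_mul_succ hl n).1

end

theorem neg_quarter_le_neg_mul_div_sq {α γ δ : ℝ} (h : 4 * γ * δ ≤ α ^ 2) :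
    -(1 / 4) ≤ -(γ * δ) / α ^ 2 := by
  rw [neg_div, neg_le_neg_iff]
  exact div_le_of_le_mul₀ (sq_nonneg α) (by norm_num) (by linarith)

theorem snakeFib_pos_of_probabilistic_regime_general (α γ δ : ℝ)
    (h : 4 * γ * δ ≤ α ^ 2) (n : ℕ) :
    0 < snakeFib n (-(γ * δ) / α ^ 2) :=
  snakeFib_pos (neg_quarter_le_neg_mul_div_sq h) n

theorem snakeFib_pos_of_probabilistic_regime (α γ δ : ℝ)
    (hα : 0 < α) (hγ : 0 ≤ γ) (hδ : 0 ≤ δ) (h : 4 * γ * δ ≤ α ^ 2) (n : ℕ) :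
    0 < snakeFib n (-(γ * δ) / α ^ 2) :=
  snakeFib_pos_of_probabilistic_regime_general α γ δ h n
end

section
/- Let n ≥ 1, ℓ ≥ 1, let ω = e^{2πi/n}, and fix z_k := ω^{(n−ℓ+1)/2 + (k−1)} for k = 1,…,ℓ (n-th roots of (−1)^{n−ℓ+1}). For an ℓ-tuple h = (h₁,…,h_ℓ) of distinct integers in {0,…,n−1}, define the matrix A^h by A^h_{j,k} = z_k^{h_j}. Then det A^h = sgn(σ_h)·(−1)^{∑_r h_r}·i^{ℓ(ℓ−1)/2}·∏_{1≤j<k≤ℓ} |ω^{h_k} − ω^{h_j}|, where σ_h is the unique permutation sorting h into increasing order. -/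
/-!
Writing `z_k = e^{2πic/n} ω^k` with `c = (n - ℓ + 1)/2` pulls the factor `e^{2πic h_j/n}` out of
row `j` and leaves the Vandermonde matrix of `ξ_j = ω^{h_j}`. Each Vandermonde factor is a chord of
the unit circle, `ξ_k - ξ_j = ± i e^{πi(h_j + h_k)/n} |ξ_k - ξ_j|`, with the sign `-` exactly when
`(j, k)` is an inversion of `h`. The signs multiply to `sgn σ`, and since every `h_r` occurs in
`ℓ - 1` pairs the phases multiply to `e^{πi(n - ℓ + 1 + ℓ - 1)∑h/n} = (-1)^{∑h}`.
-/

open Complex Real Finset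

theorem Fin.sum_sum_Ioi_add {M : Type*} [AddCommMonoid M] {ℓ : ℕ} (g : Fin ℓ → M) :
    ∑ i, ∑ j ∈ Ioi i, (g i + g j) = (ℓ - 1) • ∑ i, g i := by
  have hswap : ∑ i, ∑ j ∈ Ioi i, g j = ∑ j, ∑ _i ∈ Iio j, g j :=
    sum_comm' fun _ _ => by simp
  rw [sum_congr rfl fun i _ => sum_add_distrib, sum_add_distrib, hswap]
  simp only [Finset.sum_const, Fin.card_Ioi, Fin.card_Iio, ← sum_add_distrib, smul_sum,
    ← add_nsmul]
  exact sum_congr rfl fun i _ => by congr 1; omega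

theorem Fin.sum_card_Ioi (ℓ : ℕ) : ∑ i : Fin ℓ, #(Ioi i) = ℓ * (ℓ - 1) / 2 := by
  have h := Fin.sum_sum_Ioi_add (fun _ : Fin ℓ => 1)
  simp only [Finset.sum_const, smul_eq_mul, card_univ, Fintype.card_fin, mul_one, ← sum_mul,
    Nat.reduceAdd, mul_comm (ℓ - 1)] at h
  omega

theorem Equiv.Perm.sign_eq_prod_prod_Ioi_of_strictMono {α : Type*} [LinearOrder α] {ℓ : ℕ}
    {h : Fin ℓ → α} {σ : Equiv.Perm (Fin ℓ)} (hσ : StrictMono fun j => h (σ j)) :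
    Equiv.Perm.sign σ = ∏ i, ∏ j ∈ Ioi i, if h i < h j then 1 else -1 := by
  have hlt : ∀ i j, h i < h j ↔ σ⁻¹ i < σ⁻¹ j := fun i j => by
    simpa using hσ.lt_iff_lt (a := σ⁻¹ i) (b := σ⁻¹ j)
  simp_rw [← Equiv.Perm.sign_inv σ, Equiv.Perm.sign_eq_prod_prod_Ioi, hlt]

theorem Matrix.det_of_mul_pow_pow {R : Type*} [CommRing R] {ℓ : ℕ} (a b : R) (h : Fin ℓ → ℕ) :
    (Matrix.of fun j k : Fin ℓ => (a * b ^ (k : ℕ)) ^ h j).det =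
      a ^ (∑ j, h j) * ∏ i, ∏ j ∈ Ioi i, (b ^ h j - b ^ h i) := by
  have hcol : (Matrix.of fun j k : Fin ℓ => (a * b ^ (k : ℕ)) ^ h j) =
      Matrix.of fun j k => a ^ h j * Matrix.vandermonde (fun i => b ^ h i) j k := by
    ext j k
    simp [mul_pow, ← pow_mul, mul_comm]
  rw [hcol, Matrix.det_mul_column, Matrix.det_vandermonde, prod_pow_eq_pow_sum]

namespace Complex

theorem exp_mul_I_sub_exp_mul_I (x y : ℝ) :
    exp (↑(2 * y) * I) - exp (↑(2 * x) * I) = 2 * Real.sin (y - x) * I * exp (↑(x + y) * I) := by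
  have hsin : (2 * Real.sin (y - x) : ℂ) * I = exp (↑(y - x) * I) - exp (-↑(y - x) * I) := by
    rw [ofReal_sin, Complex.sin]
    linear_combination (exp (-↑(y - x) * I) - exp (↑(y - x) * I)) * I_sq
  rw [hsin, sub_mul, ← Complex.exp_add, ← Complex.exp_add]
  push_cast
  ring_nf

theorem exp_mul_I_sub_exp_mul_I_eq_sign_mul_norm {x y : ℝ} (hxy : x ≠ y)
    (hπ : |y - x| < π) :
    exp (↑(2 * y) * I) - exp (↑(2 * x) * I) =
      (if x < y then 1 else -1) * I * exp (↑(x + y) * I) *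
        ‖exp (↑(2 * y) * I) - exp (↑(2 * x) * I)‖ := by
  have hnorm : ‖exp (↑(2 * y) * I) - exp (↑(2 * x) * I)‖ = 2 * |Real.sin (y - x)| := by
    rw [exp_mul_I_sub_exp_mul_I, norm_mul, norm_mul, norm_mul, norm_exp_ofReal_mul_I, norm_I,
      norm_real, Real.norm_eq_abs]
    norm_num
  rw [hnorm, exp_mul_I_sub_exp_mul_I]
  split_ifs with hlt
  · have hpos : 0 < Real.sin (y - x) :=
      Real.sin_pos_of_pos_of_lt_pi (by linarith) (by linarith [le_abs_self (y - x)])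
    rw [abs_of_pos hpos]
    push_cast
    ring
  · have hneg : Real.sin (y - x) < 0 :=
      Real.sin_neg_of_neg_of_neg_pi_lt (by grind) (by linarith [neg_abs_le (y - x)])
    rw [abs_of_neg hneg]
    push_cast
    ring

theorem exp_two_pi_I_div_pow (n a : ℕ) :
    exp (2 * π * I / n) ^ a = exp (↑(2 * (π * a / n)) * I) := by
  rw [← Complex.exp_nat_mul]
  congr 1
  push_cast
  ring

theorem exp_two_pi_I_div_pow_sub_pow {n a b : ℕ} (hab : a ≠ b) (ha : a < n) (hb : b < n) :
    exp (2 * π * I / n) ^ b - exp (2 * π * I / n) ^ a =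
      (if a < b then 1 else -1) * I * exp (π * I / n) ^ (a + b) *
        ‖exp (2 * π * I / n) ^ b - exp (2 * π * I / n) ^ a‖ := by
  have ha' : (a : ℝ) < n := by exact_mod_cast ha
  have hb' : (b : ℝ) < n := by exact_mod_cast hb
  have hn : (0 : ℝ) < n := by linarith [(Nat.cast_nonneg a : (0 : ℝ) ≤ a)]
  have hne : π * a / n ≠ π * b / n := by
    rwa [Ne, div_left_inj' hn.ne', mul_right_inj' pi_ne_zero, Nat.cast_inj]
  have hπ : |π * b / n - π * a / n| < π := by
    rw [← sub_div, ← mul_sub, abs_div, abs_mul, abs_of_pos pi_pos, abs_of_pos hn,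
      div_lt_iff₀ hn, mul_lt_mul_iff_right₀ pi_pos, abs_sub_lt_iff]
    constructor <;> linarith [(Nat.cast_nonneg a : (0 : ℝ) ≤ a), (Nat.cast_nonneg b : (0 : ℝ) ≤ b)]
  have hlt : π * a / n < π * b / n ↔ a < b := by
    rw [div_lt_div_iff_of_pos_right hn, mul_lt_mul_iff_right₀ pi_pos, Nat.cast_lt]
  have hphase : exp (↑(π * a / n + π * b / n) * I) = exp (π * I / n) ^ (a + b) := by
    rw [← Complex.exp_nat_mul]
    push_cast
    ring_nf
  simp only [exp_two_pi_I_div_pow]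
  conv_lhs => rw [exp_mul_I_sub_exp_mul_I_eq_sign_mul_norm hne hπ, hphase]
  simp only [hlt]

theorem exp_two_pi_I_div_mul_mul_exp_pi_I_div_pow_eq_neg_one {n ℓ : ℕ} (hn : n ≠ 0)
    (hℓ : 1 ≤ ℓ) :
    exp (2 * π * I / n * (((n : ℝ) - ℓ + 1) / 2 : ℝ)) * exp (π * I / n) ^ (ℓ - 1)
      = -1 := by
  rw [← Complex.exp_nat_mul, ← Complex.exp_add, ← exp_pi_mul_I]
  congr 1
  push_cast [Nat.cast_sub hℓ]
  field_simp
  ring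

end Complex

/-- Vandermonde-type determinant evaluation: with `z_k = ω^{(n−ℓ+1)/2 + (k−1)}` (for
`ω = e^{2πi/n}`) and distinct `h_j ∈ {0,…,n−1}`, the determinant of `A_{j,k} = z_k^{h_j}`
equals `sgn(σ_h) (−1)^{∑ h} i^{ℓ(ℓ−1)/2} ∏_{j<k} |ω^{h_k} − ω^{h_j}|`, where `σ_h` is the
permutation sorting `h` increasingly. -/
theorem vandermonde_root_determinant (n ℓ : ℕ) (hn : 1 ≤ n) (hℓ : 1 ≤ ℓ)
    (h : Fin ℓ → ℕ) (hlt : ∀ j, h j < n) (hinj : Function.Injective h)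
    (σ : Equiv.Perm (Fin ℓ)) (hσ : StrictMono fun j => h (σ j)) :
    (Matrix.of fun j k : Fin ℓ =>
        (Complex.exp (2 * Real.pi * Complex.I / n * ((((n : ℝ) - ℓ + 1) / 2 : ℝ) + k))) ^ (h j)).det
      = ((Equiv.Perm.sign σ : ℤ) : ℂ) * (-1) ^ (∑ r, h r) * Complex.I ^ (ℓ * (ℓ - 1) / 2) *
        ∏ p ∈ Finset.univ.filter (fun p : Fin ℓ × Fin ℓ => p.1 < p.2),
          ((‖Complex.exp (2 * Real.pi * Complex.I / n) ^ (h p.2)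
            - Complex.exp (2 * Real.pi * Complex.I / n) ^ (h p.1)‖ : ℝ) : ℂ) := by
  have hrow : ∀ k : Fin ℓ, exp (2 * π * I / n * ((((n : ℝ) - ℓ + 1) / 2 : ℝ) + k)) =
      exp (2 * π * I / n * (((n : ℝ) - ℓ + 1) / 2 : ℝ)) * exp (2 * π * I / n) ^ (k : ℕ) := by
    intro k
    rw [← Complex.exp_nat_mul, ← Complex.exp_add]
    ring_nf
  have hsign : ((Equiv.Perm.sign σ : ℤ) : ℂ) = ∏ i, ∏ j ∈ Ioi i, if h i < h j then 1 else -1 := by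
    rw [Equiv.Perm.sign_eq_prod_prod_Ioi_of_strictMono hσ]
    push_cast [apply_ite]
    rfl
  have hphase : exp (2 * π * I / n * (((n : ℝ) - ℓ + 1) / 2 : ℝ)) ^ (∑ r, h r) *
      (exp (π * I / n) ^ (ℓ - 1)) ^ (∑ r, h r) = (-1) ^ (∑ r, h r) := by
    rw [← mul_pow, exp_two_pi_I_div_mul_mul_exp_pi_I_div_pow_eq_neg_one (by omega) hℓ]
  simp_rw [hrow, Matrix.det_of_mul_pow_pow]
  rw [prod_congr rfl fun i _ => prod_congr rfl fun j hj =>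
    exp_two_pi_I_div_pow_sub_pow (hinj.ne (mem_Ioi.1 hj).ne) (hlt i) (hlt j)]
  simp_rw [prod_mul_distrib, prod_const, prod_pow_eq_pow_sum, Fin.sum_sum_Ioi_add,
    Fin.sum_card_Ioi, smul_eq_mul, pow_mul]
  rw [hsign, ← hphase, prod_filter, Fintype.prod_prod_type]
  simp only [← prod_filter, filter_lt_eq_Ioi]
  ring
end
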